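/- arXiv:1903.03403 — 2 statements merged into one kernel-verified Lean document; each statement's English description precedes it below -/
import Mathlib

section
/- For a bounded linear operator T on a complex Hilbert space H, w(T)³ ≤ (1/4)w(T³) + (1/4)w(T²T* + T*T² + TT*T). -/
open Complex

variable {H : Type*} [NormedAddCommGroup H] [InnerProductSpace ℂ H] [CompleteSpace H]

/-- The numerical radius `w(T) = sup {|⟨Tx,x⟩| : ‖x‖ = 1}`. -/
noncomputable def numRadius (T : H →L[ℂ] H) : ℝ :=
  sSup {r : ℝ | ∃ x : H, ‖x‖ = 1 ∧ r = ‖(inner ℂ (T x) x : ℂ)‖}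

/-- The Crawford number `m(T) = inf {|⟨Tx,x⟩| : ‖x‖ = 1}`. -/
noncomputable def crawford (T : H →L[ℂ] H) : ℝ :=
  sInf {r : ℝ | ∃ x : H, ‖x‖ = 1 ∧ r = ‖(inner ℂ (T x) x : ℂ)‖}

/-- The real part `Re(T) = (T + T*)/2`. -/
noncomputable def reOp (T : H →L[ℂ] H) : H →L[ℂ] H := (2 : ℂ)⁻¹ • (T + star T)

/-- The imaginary part `Im(T) = (T - T*)/(2i)`. -/
noncomputable def imOp (T : H →L[ℂ] H) : H →L[ℂ] H := (2 * Complex.I)⁻¹ • (T - star T)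

/-!
Fix a unit vector `x` and a unimodular `c` with `Re ⟪(c • T) x, x⟫ = |⟪T x, x⟫|`. The operator
`B = Re (c • T)` is self-adjoint, so `|⟪T x, x⟫| ≤ ‖B‖` and `‖B‖ ^ 3 = ‖B ^ 3‖`. Expanding
`B ^ 3 = (c T + c̄ T*) ^ 3 / 8` and using `|c| = 1` gives `B ^ 3 = Re (c³ T³) / 4 + Re (c D) / 4` with
`D = T² T* + T* T² + T T* T`, and the real part of any unimodular rotation of an operator `S` has
norm at most `w(S)`.
-/

open ComplexConjugate ContinuousLinearMap
open scoped InnerProductSpace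

theorem ContinuousLinearMap.norm_le_of_abs_re_inner_self_le {𝕜 E : Type*} [RCLike 𝕜]
    [NormedAddCommGroup E] [InnerProductSpace 𝕜 E] {A : E →L[𝕜] E}
    (hA : (A : E →ₗ[𝕜] E).IsSymmetric) {C : ℝ} (hC : 0 ≤ C)
    (h : ∀ x, |RCLike.re ⟪A x, x⟫_𝕜| ≤ C * ‖x‖ ^ 2) : ‖A‖ ≤ C := by
  rw [A.norm_eq_iSup_rayleighQuotient hA]
  refine ciSup_le fun x => ?_
  rw [rayleighQuotient, reApplyInnerSelf_apply, abs_div, abs_sq]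
  exact div_le_of_le_mul₀ (sq_nonneg _) hC (h x)

theorem IsSelfAdjoint.norm_pow_three {E : Type*} [NormedRing E] [StarRing E] [CStarRing E]
    {a : E} (ha : IsSelfAdjoint a) : ‖a ^ 3‖ = ‖a‖ ^ 3 := by
  refine le_antisymm (norm_pow_le' a three_pos) ?_
  rcases (norm_nonneg a).eq_or_lt with ha0 | ha0
  · simp [← ha0]
  refine le_of_mul_le_mul_right ?_ ha0
  calc ‖a‖ ^ 3 * ‖a‖ = ‖a ^ 2 ^ 2‖ := by rw [ha.norm_pow_two_pow]; ring
    _ = ‖a ^ 3 * a‖ := by rw [← pow_succ]; norm_num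
    _ ≤ ‖a ^ 3‖ * ‖a‖ := norm_mul_le _ _

section NumericalRadius

variable {E : Type*} [NormedAddCommGroup E] [InnerProductSpace ℂ E] (T : E →L[ℂ] E)

theorem numRadius_nonneg : 0 ≤ numRadius T :=
  Real.sSup_nonneg (by rintro r ⟨x, -, rfl⟩; positivity)

theorem norm_inner_le_numRadius {x : E} (hx : ‖x‖ = 1) : ‖⟪T x, x⟫_ℂ‖ ≤ numRadius T := by
  refine le_csSup ⟨‖T‖, ?_⟩ ⟨x, hx, rfl⟩
  rintro r ⟨y, hy, rfl⟩
  calc ‖⟪T y, y⟫_ℂ‖ ≤ ‖T y‖ * ‖y‖ := norm_inner_le_norm _ _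
    _ ≤ ‖T‖ * ‖y‖ * ‖y‖ := by gcongr; exact T.le_opNorm y
    _ = ‖T‖ := by rw [hy, mul_one, mul_one]

theorem norm_inner_le_numRadius_mul_sq (x : E) :
    ‖⟪T x, x⟫_ℂ‖ ≤ numRadius T * ‖x‖ ^ 2 := by
  rcases eq_or_ne x 0 with rfl | hx
  · simp
  have hx' : 0 < ‖x‖ := norm_pos_iff.2 hx
  have hunit : ‖((‖x‖⁻¹ : ℝ) : ℂ) • x‖ = 1 := by
    rw [norm_smul, norm_real, Real.norm_of_nonneg (inv_nonneg.2 hx'.le), inv_mul_cancel₀ hx'.ne']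
  have h := norm_inner_le_numRadius T hunit
  rw [map_smul, inner_smul_left, inner_smul_right, norm_mul, norm_mul, RCLike.norm_conj,
    norm_real, Real.norm_of_nonneg (inv_nonneg.2 hx'.le), ← mul_assoc, ← mul_inv, ← sq,
    inv_mul_le_iff₀ (by positivity)] at h
  linarith

theorem numRadius_pow_le {n : ℕ} (hn : n ≠ 0) {C : ℝ} (hC : 0 ≤ C)
    (h : ∀ x : E, ‖x‖ = 1 → ‖⟪T x, x⟫_ℂ‖ ^ n ≤ C) : numRadius T ^ n ≤ C := by
  have hroot : numRadius T ≤ C ^ (n⁻¹ : ℝ) := by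
    refine Real.sSup_le ?_ (by positivity)
    rintro r ⟨x, hx, rfl⟩
    rw [Real.le_rpow_inv_iff_of_pos (norm_nonneg _) hC (by positivity), Real.rpow_natCast]
    exact h x hx
  calc numRadius T ^ n ≤ (C ^ (n⁻¹ : ℝ)) ^ n := by gcongr; exact numRadius_nonneg T
    _ = C := Real.rpow_inv_natCast_pow hC hn

end NumericalRadius

section RealPart

variable (A : H →L[ℂ] H)

theorem isSelfAdjoint_reOp : IsSelfAdjoint (reOp A) := by
  simp [IsSelfAdjoint, reOp, star_smul, add_comm]

theorem inner_reOp_apply_self (x : H) : ⟪reOp A x, x⟫_ℂ = ((⟪A x, x⟫_ℂ).re : ℂ) := by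
  have hstar : ⟪star A x, x⟫_ℂ = conj ⟪A x, x⟫_ℂ := by
    rw [star_eq_adjoint, adjoint_inner_left, inner_conj_symm]
  rw [reOp, smul_apply, add_apply, inner_smul_left, inner_add_left, hstar, Complex.add_conj,
    map_inv₀, map_ofNat, ofReal_mul, ofReal_ofNat, inv_mul_cancel_left₀ two_ne_zero]

theorem norm_reOp_smul_le (c : ℂ) : ‖reOp (c • A)‖ ≤ ‖c‖ * numRadius A := by
  refine norm_le_of_abs_re_inner_self_le (isSelfAdjoint_reOp _).isSymmetric
    (by positivity [numRadius_nonneg A]) fun x => ?_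
  rw [inner_reOp_apply_self, RCLike.re_to_complex, ofReal_re]
  calc |(⟪(c • A) x, x⟫_ℂ).re| ≤ ‖⟪(c • A) x, x⟫_ℂ‖ := Complex.abs_re_le_norm _
    _ = ‖c‖ * ‖⟪A x, x⟫_ℂ‖ := by rw [smul_apply, inner_smul_left, norm_mul, RCLike.norm_conj]
    _ ≤ ‖c‖ * (numRadius A * ‖x‖ ^ 2) := by gcongr; exact norm_inner_le_numRadius_mul_sq A x
    _ = ‖c‖ * numRadius A * ‖x‖ ^ 2 := by ring

theorem exists_norm_inner_le_norm_reOp_smul {x : H} (hx : ‖x‖ = 1) :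
    ∃ c : ℂ, ‖c‖ = 1 ∧ ‖⟪A x, x⟫_ℂ‖ ≤ ‖reOp (c • A)‖ := by
  obtain ⟨c, hc, hcβ⟩ := Complex.exists_norm_mul_eq_self ⟪A x, x⟫_ℂ
  refine ⟨c, hc, ?_⟩
  have hrot : conj c * ⟪A x, x⟫_ℂ = ‖⟪A x, x⟫_ℂ‖ := by
    conv_lhs => rw [← hcβ, ← mul_assoc, RCLike.conj_mul, hc]
    simp
  calc ‖⟪A x, x⟫_ℂ‖ = ‖⟪reOp (c • A) x, x⟫_ℂ‖ := by
        rw [inner_reOp_apply_self, smul_apply, inner_smul_left, hrot, ofReal_re, norm_real,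
          norm_norm]
    _ ≤ ‖reOp (c • A) x‖ * ‖x‖ := norm_inner_le_norm _ _
    _ ≤ ‖reOp (c • A)‖ := by simpa [hx] using (reOp (c • A)).le_opNorm x

theorem reOp_smul_pow_three {c : ℂ} (hc : ‖c‖ = 1) :
    reOp (c • A) ^ 3 = (4 : ℂ)⁻¹ • reOp (c ^ 3 • A ^ 3)
      + (4 : ℂ)⁻¹ • reOp (c • (A ^ 2 * star A + star A * A ^ 2 + A * star A * A)) := by
  have hcc : c * conj c = 1 := by rw [RCLike.mul_conj, hc]; norm_num
  simp only [reOp, star_smul, star_add, star_mul, star_star, RCLike.star_def, pow_succ, pow_zero,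
    one_mul, add_mul, mul_add, smul_mul_assoc, mul_smul_comm, smul_smul, smul_add, mul_assoc]
  -- the mixed terms of the expansion carry `c² c̄ = c` and `c c̄² = c̄`
  linear_combination (norm := module)
    ((8 : ℂ)⁻¹ * c) • hcc • (A * (A * star A) + star A * (A * A) + A * (star A * A))
      + ((8 : ℂ)⁻¹ * conj c) • hcc •
        (star A * (star A * A) + A * (star A * star A) + star A * (A * star A))

end RealPart

theorem stmt1 (T : H →L[ℂ] H) :
    numRadius T ^ 3 ≤
      (1/4) * numRadius (T ^ 3)
        + (1/4) * numRadius (T ^ 2 * star T + star T * T ^ 2 + T * star T * T) := by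
  set D := T ^ 2 * star T + star T * T ^ 2 + T * star T * T
  refine numRadius_pow_le T three_ne_zero
    (by positivity [numRadius_nonneg (T ^ 3), numRadius_nonneg D]) fun x hx => ?_
  obtain ⟨c, hc, hβ⟩ := exists_norm_inner_le_norm_reOp_smul T hx
  calc ‖⟪T x, x⟫_ℂ‖ ^ 3 ≤ ‖reOp (c • T)‖ ^ 3 := by gcongr
    _ = ‖reOp (c • T) ^ 3‖ := (isSelfAdjoint_reOp _).norm_pow_three.symm
    _ = ‖(4 : ℂ)⁻¹ • reOp (c ^ 3 • T ^ 3) + (4 : ℂ)⁻¹ • reOp (c • D)‖ := by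
        rw [reOp_smul_pow_three T hc]
    _ ≤ (1/4) * ‖reOp (c ^ 3 • T ^ 3)‖ + (1/4) * ‖reOp (c • D)‖ := by
        refine (norm_add_le _ _).trans_eq ?_
        simp only [norm_smul, norm_inv]
        norm_num
    _ ≤ (1/4) * numRadius (T ^ 3) + (1/4) * numRadius D := by
        gcongr
        · exact (norm_reOp_smul_le _ _).trans_eq (by rw [norm_pow, hc, one_pow, one_mul])
        · exact (norm_reOp_smul_le _ _).trans_eq (by rw [hc, one_mul])
end

section
/- For bounded linear operators T, P on a complex Hilbert space with P self-adjoint, w(T²P + PT²) ≤ 2·w(T²)·‖P‖. -/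
open Complex

variable {H : Type*} [NormedAddCommGroup H] [InnerProductSpace ℂ H] [CompleteSpace H]

/-!
For self-adjoint `P`, `⟪(AP + PA)x, x⟫ = ⟪A (Px), x⟫ + ⟪A x, Px⟫`. The polarization identity
`⟪A(x+y), x+y⟫ - ⟪A(x-y), x-y⟫ = 2 (⟪Ax, y⟫ + ⟪Ay, x⟫)` together with the parallelogram law bounds
`‖⟪Ax, y⟫ + ⟪Ay, x⟫‖` by `w(A) (‖x‖² + ‖y‖²)`; applied to `‖y‖ x` and `‖x‖ y` this becomes
`2 w(A) ‖x‖ ‖y‖`, and `‖Px‖ ≤ ‖P‖` finishes the proof.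
-/

set_option linter.unusedSectionVars false

lemma numRadius_nonneg_s18 (A : H →L[ℂ] H) : 0 ≤ numRadius A :=
  Real.sSup_nonneg fun _ ⟨_, _, hr⟩ => hr ▸ norm_nonneg _

lemma norm_inner_apply_self_le_numRadius (A : H →L[ℂ] H) {x : H} (hx : ‖x‖ = 1) :
    ‖(inner ℂ (A x) x : ℂ)‖ ≤ numRadius A := by
  have hbdd : BddAbove {r : ℝ | ∃ x : H, ‖x‖ = 1 ∧ r = ‖(inner ℂ (A x) x : ℂ)‖} := by
    refine ⟨‖A‖, ?_⟩
    rintro _ ⟨x, hx, rfl⟩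
    calc ‖(inner ℂ (A x) x : ℂ)‖ ≤ ‖A x‖ * ‖x‖ := norm_inner_le_norm _ _
      _ ≤ ‖A‖ := by simpa [hx] using A.le_opNorm x
  exact le_csSup hbdd ⟨x, hx, rfl⟩

lemma numRadius_le {A : H →L[ℂ] H} {c : ℝ} (hc : 0 ≤ c)
    (h : ∀ x : H, ‖x‖ = 1 → ‖(inner ℂ (A x) x : ℂ)‖ ≤ c) : numRadius A ≤ c :=
  Real.sSup_le (fun _ ⟨x, hx, hr⟩ => hr ▸ h x hx) hc

lemma norm_inner_apply_self_le_numRadius_mul_sq (A : H →L[ℂ] H) (x : H) :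
    ‖(inner ℂ (A x) x : ℂ)‖ ≤ numRadius A * ‖x‖ ^ 2 := by
  rcases eq_or_ne x 0 with rfl | hx
  · simp
  have hunit : ‖((‖x‖⁻¹ : ℝ) : ℂ) • x‖ = 1 := by
    rw [norm_smul, Complex.norm_real, Real.norm_of_nonneg (by positivity),
      inv_mul_cancel₀ (norm_ne_zero_iff.mpr hx)]
  have := norm_inner_apply_self_le_numRadius A hunit
  simp only [map_smul, inner_smul_left, inner_smul_right, Complex.conj_ofReal, norm_mul,
    Complex.norm_real, norm_inv, norm_norm] at this
  rwa [← mul_assoc, ← mul_inv, ← sq, inv_mul_le_iff₀ (by positivity), mul_comm] at this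

lemma norm_inner_add_inner_le_numRadius_mul (A : H →L[ℂ] H) (x y : H) :
    ‖(inner ℂ (A x) y : ℂ) + inner ℂ (A y) x‖ ≤ numRadius A * (‖x‖ ^ 2 + ‖y‖ ^ 2) := by
  have polarization : (inner ℂ (A (x + y)) (x + y) : ℂ) - inner ℂ (A (x - y)) (x - y)
      = 2 * ((inner ℂ (A x) y : ℂ) + inner ℂ (A y) x) := by
    simp only [map_add, map_sub, inner_add_left, inner_add_right, inner_sub_left,
      inner_sub_right]
    ring
  have parallelogram : ‖x + y‖ ^ 2 + ‖x - y‖ ^ 2 = 2 * (‖x‖ ^ 2 + ‖y‖ ^ 2) := by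
    simpa only [sq, two_mul, mul_add] using parallelogram_law_with_norm ℂ x y
  have h := (norm_sub_le _ _).trans (add_le_add
    (norm_inner_apply_self_le_numRadius_mul_sq A (x + y))
    (norm_inner_apply_self_le_numRadius_mul_sq A (x - y)))
  rw [polarization, norm_mul, Complex.norm_two, ← mul_add, parallelogram] at h
  linarith

lemma norm_inner_add_inner_le_two_mul_numRadius_mul (A : H →L[ℂ] H) (x y : H) :
    ‖(inner ℂ (A x) y : ℂ) + inner ℂ (A y) x‖ ≤ 2 * numRadius A * (‖x‖ * ‖y‖) := by
  rcases eq_or_ne x 0 with rfl | hx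
  · simp
  rcases eq_or_ne y 0 with rfl | hy
  · simp
  have hxy : 0 < ‖x‖ * ‖y‖ := by positivity
  have h := norm_inner_add_inner_le_numRadius_mul A ((‖y‖ : ℂ) • x) ((‖x‖ : ℂ) • y)
  have hscale : (inner ℂ (A ((‖y‖ : ℂ) • x)) ((‖x‖ : ℂ) • y) : ℂ)
      + inner ℂ (A ((‖x‖ : ℂ) • y)) ((‖y‖ : ℂ) • x)
      = ((‖x‖ * ‖y‖ : ℝ) : ℂ) * ((inner ℂ (A x) y : ℂ) + inner ℂ (A y) x) := by
    simp only [map_smul, inner_smul_left, inner_smul_right, Complex.conj_ofReal]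
    push_cast
    ring
  rw [hscale, norm_mul, Complex.norm_real, Real.norm_of_nonneg hxy.le] at h
  simp only [norm_smul, Complex.norm_real, norm_norm] at h
  refine le_of_mul_le_mul_left ?_ hxy
  linarith

lemma numRadius_mul_add_mul_le (A P : H →L[ℂ] H) (hP : IsSelfAdjoint P) :
    numRadius (A * P + P * A) ≤ 2 * numRadius A * ‖P‖ := by
  have hA := numRadius_nonneg_s18 A
  refine numRadius_le (by positivity) fun x hx => ?_
  have hsplit : (inner ℂ ((A * P + P * A) x) x : ℂ)
      = inner ℂ (A (P x)) x + inner ℂ (A x) (P x) := by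
    rw [add_apply, inner_add_left]
    exact congrArg _ (hP.isSymmetric (A x) x)
  calc ‖(inner ℂ ((A * P + P * A) x) x : ℂ)‖ ≤ 2 * numRadius A * (‖P x‖ * ‖x‖) :=
        hsplit ▸ norm_inner_add_inner_le_two_mul_numRadius_mul A (P x) x
    _ ≤ 2 * numRadius A * ‖P‖ := by
        gcongr
        simpa [hx] using P.le_opNorm x

theorem stmt18 (T P : H →L[ℂ] H) (hP : star P = P) :
    numRadius (T ^ 2 * P + P * T ^ 2) ≤ 2 * numRadius (T ^ 2) * ‖P‖ :=
  numRadius_mul_add_mul_le _ _ hP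
end
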